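/- Let α : B → C and α' : B' → C' be surjective non-unital k-algebra homomorphisms with k-linear splittings β of α and β' of α', and let h : B → B', g : C → C' be non-unital k-algebra homomorphisms with α'∘h = g∘α. Let T(g) : TensorAlgebra k C → TensorAlgebra k C' be the algebra homomorphism with T(g)(ι c) = ι(g c), and let V̄ : TensorAlgebra k C → Polynomial (Unitization k B') be the unique k-algebra homomorphism with V̄(ι c) = C(inr(h(β c))) + C(inr(β'(g c) − h(β c)))·X. Then: (i) Polynomial.map (Unitization.map α') ∘ V̄ = Polynomial.C ∘ η_{C'} ∘ T(g); (ii) evaluation at X = 0 composed with V̄ equals (Unitization.map h) ∘ γ_β, and evaluation at X = 1 composed with V̄ equals γ_{β'} ∘ T(g). Consequently T(g) maps J(C) into J(C'), every coefficient of V̄(a) for a ∈ J(C) lies in inr(ker α'), and V̄ realizes an elementary homotopy between h∘ξ_β and ξ_{β'}∘J(g) : J(C) → ker α', where J(g) is the restriction of T(g) to J(C). -/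

import Mathlib

noncomputable section

namespace NUPolyAux

/-! Auxiliary constructions at the level of finitely supported functions. -/

variable {R : Type*} [NonUnitalRing R]

/-- Convolution product of coefficient sequences. -/
def mulF (p q : ℕ →₀ R) : ℕ →₀ R :=
  p.sum fun i a => q.sum fun j b => Finsupp.single (i + j) (a * b)

/-- Interpretation of a coefficient sequence as a polynomial over the
unitization of `R`. -/
def toPUF (p : ℕ →₀ R) : Polynomial (Unitization ℤ R) :=
  p.sum fun i a => Polynomial.monomial i (Unitization.inr a)

theorem toPUF_single (i : ℕ) (a : R) :
    toPUF (Finsupp.single i a) = Polynomial.monomial i (Unitization.inr a) := by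
  rw [toPUF, Finsupp.sum_single_index]
  simp

theorem coeff_toPUF (p : ℕ →₀ R) (n : ℕ) :
    (toPUF p).coeff n = Unitization.inr (p n) := by
  classical
  rw [toPUF, Finsupp.sum, Polynomial.finset_sum_coeff]
  simp only [Polynomial.coeff_monomial]
  rw [Finset.sum_ite_eq' p.support n fun i => Unitization.inr (p i)]
  split
  · rfl
  · next h => rw [Finsupp.notMem_support_iff.mp h, Unitization.inr_zero]

theorem toPUF_injective : Function.Injective (toPUF (R := R)) := by
  intro p q h
  ext n
  apply Unitization.inr_injective (R := ℤ)
  rw [← coeff_toPUF, ← coeff_toPUF, h]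

theorem toPUF_zero : toPUF (0 : ℕ →₀ R) = 0 := by
  refine Polynomial.ext fun n => ?_
  rw [coeff_toPUF, Finsupp.zero_apply, Unitization.inr_zero, Polynomial.coeff_zero]

theorem toPUF_add (p q : ℕ →₀ R) : toPUF (p + q) = toPUF p + toPUF q := by
  refine Polynomial.ext fun n => ?_
  rw [coeff_toPUF, Polynomial.coeff_add, coeff_toPUF, coeff_toPUF,
    Finsupp.add_apply, Unitization.inr_add]

/-- `toPUF` as an additive monoid homomorphism. -/
def toPUFHom : (ℕ →₀ R) →+ Polynomial (Unitization ℤ R) where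
  toFun := toPUF
  map_zero' := toPUF_zero
  map_add' := toPUF_add

@[simp] theorem toPUFHom_apply (p : ℕ →₀ R) : toPUFHom p = toPUF p := rfl

theorem toPUF_mulF (p q : ℕ →₀ R) : toPUF (mulF p q) = toPUF p * toPUF q := by
  classical
  have h1 : toPUF (mulF p q)
      = p.sum fun i a => q.sum fun j b =>
          Polynomial.monomial (i + j) (Unitization.inr (a * b)) := by
    rw [mulF, ← toPUFHom_apply, map_finsuppSum]
    refine Finsupp.sum_congr fun i _ => ?_
    rw [map_finsuppSum]
    exact Finsupp.sum_congr fun j _ => toPUF_single _ _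
  rw [h1, toPUF, toPUF, Finsupp.sum_mul]
  refine Finsupp.sum_congr fun i _ => ?_
  rw [Finsupp.mul_sum]
  refine Finsupp.sum_congr fun j _ => ?_
  rw [Polynomial.monomial_mul_monomial, Unitization.inr_mul]

end NUPolyAux

/-- The non-unital polynomial algebra `R[x]` over a non-unital ring `R`:
the type of finitely supported coefficient sequences (i.e. of
`AddMonoidAlgebra R ℕ`) equipped with the convolution product. -/
structure NUPoly (R : Type*) [NonUnitalRing R] where
  /-- the coefficient sequence of a non-unital polynomial -/
  toFinsupp : ℕ →₀ R

namespace NUPoly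

open NUPolyAux

variable {R : Type*} [NonUnitalRing R]

theorem toFinsupp_injective :
    Function.Injective (toFinsupp : NUPoly R → (ℕ →₀ R)) := by
  rintro ⟨p⟩ ⟨q⟩ h
  simpa using h

instance instZero : Zero (NUPoly R) := ⟨⟨0⟩⟩
instance instAdd : Add (NUPoly R) := ⟨fun p q => ⟨p.toFinsupp + q.toFinsupp⟩⟩
instance instNeg : Neg (NUPoly R) := ⟨fun p => ⟨-p.toFinsupp⟩⟩
instance instSub : Sub (NUPoly R) := ⟨fun p q => ⟨p.toFinsupp - q.toFinsupp⟩⟩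
instance instSMul {S : Type*} [SMulZeroClass S R] : SMul S (NUPoly R) :=
  ⟨fun c p => ⟨c • p.toFinsupp⟩⟩
instance instMul : Mul (NUPoly R) := ⟨fun p q => ⟨mulF p.toFinsupp q.toFinsupp⟩⟩

@[simp] theorem toFinsupp_zero : (0 : NUPoly R).toFinsupp = 0 := rfl
@[simp] theorem toFinsupp_add (p q : NUPoly R) :
    (p + q).toFinsupp = p.toFinsupp + q.toFinsupp := rfl
@[simp] theorem toFinsupp_smul {S : Type*} [SMulZeroClass S R] (c : S) (p : NUPoly R) :
    (c • p).toFinsupp = c • p.toFinsupp := rfl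
@[simp] theorem toFinsupp_mul (p q : NUPoly R) :
    (p * q).toFinsupp = mulF p.toFinsupp q.toFinsupp := rfl

instance instAddCommGroup : AddCommGroup (NUPoly R) :=
  toFinsupp_injective.addCommGroup toFinsupp rfl (fun _ _ => rfl) (fun _ => rfl)
    (fun _ _ => rfl) (fun _ _ => rfl) (fun _ _ => rfl)

/-- The interpretation of `p ∈ R[x]` as a polynomial over the unitization of `R`. -/
def toPU (p : NUPoly R) : Polynomial (Unitization ℤ R) := toPUF p.toFinsupp

theorem toPU_injective : Function.Injective (toPU (R := R)) :=
  fun _ _ h => toFinsupp_injective (toPUF_injective h)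

theorem toPU_zero : toPU (0 : NUPoly R) = 0 := toPUF_zero
theorem toPU_add (p q : NUPoly R) : toPU (p + q) = toPU p + toPU q := toPUF_add _ _
theorem toPU_mul (p q : NUPoly R) : toPU (p * q) = toPU p * toPU q := toPUF_mulF _ _

instance instNonUnitalRing : NonUnitalRing (NUPoly R) :=
  { instAddCommGroup, instMul with
    left_distrib := fun p q r => toPU_injective <| by
      rw [toPU_mul, toPU_add, toPU_add, toPU_mul, toPU_mul, mul_add]
    right_distrib := fun p q r => toPU_injective <| by
      rw [toPU_mul, toPU_add, toPU_add, toPU_mul, toPU_mul, add_mul]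
    zero_mul := fun p => toPU_injective <| by
      rw [toPU_mul, toPU_zero, zero_mul]
    mul_zero := fun p => toPU_injective <| by
      rw [toPU_mul, toPU_zero, mul_zero]
    mul_assoc := fun p q r => toPU_injective <| by
      rw [toPU_mul, toPU_mul, toPU_mul, toPU_mul, mul_assoc] }

theorem mul_def (p q : NUPoly R) :
    (p * q).toFinsupp
      = p.toFinsupp.sum fun i a => q.toFinsupp.sum fun j b =>
          Finsupp.single (i + j) (a * b) := rfl

theorem mul_apply (p q : NUPoly R) (n : ℕ) :
    (p * q).toFinsupp n = ∑ x ∈ Finset.HasAntidiagonal.antidiagonal n, p.toFinsupp x.1 * q.toFinsupp x.2 := by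
  apply Unitization.inr_injective (R := ℤ)
  have h : (Unitization.inr ((p * q).toFinsupp n) : Unitization ℤ R)
      = ∑ x ∈ Finset.HasAntidiagonal.antidiagonal n,
          (Unitization.inr (p.toFinsupp x.1) * Unitization.inr (q.toFinsupp x.2) :
            Unitization ℤ R) := by
    rw [← coeff_toPUF, ← toPU, toPU_mul, Polynomial.coeff_mul]
    exact Finset.sum_congr rfl fun x _ => by
      rw [toPU, toPU, coeff_toPUF, coeff_toPUF]
  rw [h]
  simp only [← Unitization.inr_mul]
  exact (map_sum (Unitization.inrHom ℤ ℤ R) (fun x => p.toFinsupp x.1 * q.toFinsupp x.2)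
    (Finset.HasAntidiagonal.antidiagonal n)).symm

section Module

variable {k : Type*} [Semiring k] [Module k R]

/-- `toFinsupp` as an additive monoid homomorphism. -/
def toFinsuppAddHom : NUPoly R →+ (ℕ →₀ R) where
  toFun := toFinsupp
  map_zero' := rfl
  map_add' := fun _ _ => rfl

instance instModule : Module k (NUPoly R) :=
  Function.Injective.module k toFinsuppAddHom toFinsupp_injective fun _ _ => rfl

end Module

section Scalars

variable (k : Type*) [CommRing k] [Module k R]

instance instIsScalarTower [IsScalarTower k R R] :
    IsScalarTower k (NUPoly R) (NUPoly R) := by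
  refine ⟨fun c p q => ?_⟩
  rw [smul_eq_mul, smul_eq_mul]
  apply toFinsupp_injective
  simp only [toFinsupp_mul, toFinsupp_smul]
  rw [mulF, mulF, Finsupp.sum_smul_index' (by simp), Finsupp.smul_sum]
  refine Finsupp.sum_congr fun i _ => ?_
  rw [Finsupp.smul_sum]
  refine Finsupp.sum_congr fun j _ => ?_
  rw [smul_mul_assoc, Finsupp.smul_single]

instance instSMulCommClass [SMulCommClass k R R] :
    SMulCommClass k (NUPoly R) (NUPoly R) := by
  refine ⟨fun c p q => ?_⟩
  rw [smul_eq_mul, smul_eq_mul]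
  apply toFinsupp_injective
  simp only [toFinsupp_mul, toFinsupp_smul]
  rw [mulF, mulF, Finsupp.smul_sum]
  refine Finsupp.sum_congr fun i _ => ?_
  rw [Finsupp.sum_smul_index' (by simp), Finsupp.smul_sum]
  refine Finsupp.sum_congr fun j _ => ?_
  rw [mul_smul_comm, Finsupp.smul_single]

end Scalars

/-- The non-unital polynomial `r·xⁱ`. -/
def single (i : ℕ) (a : R) : NUPoly R := ⟨Finsupp.single i a⟩

/-- Evaluation at `x = 0` (the constant coefficient), as a non-unital algebra
homomorphism `∂⁰ : R[x] → R`. -/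
def atZero (k R : Type*) [CommRing k] [NonUnitalRing R] [Module k R] :
    NUPoly R →ₙₐ[k] R where
  toFun p := p.toFinsupp 0
  map_add' p q := by
    show (p + q).toFinsupp 0 = p.toFinsupp 0 + q.toFinsupp 0
    rw [toFinsupp_add, Finsupp.add_apply]
  map_smul' c p := by
    show (c • p).toFinsupp 0 = c • p.toFinsupp 0
    rw [toFinsupp_smul, Finsupp.smul_apply]
  map_zero' := rfl
  map_mul' p q := by
    show (p * q).toFinsupp 0 = p.toFinsupp 0 * q.toFinsupp 0
    rw [mul_apply, Finset.Nat.antidiagonal_zero, Finset.sum_singleton]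

/-- Evaluation at `x = 1` (the sum of the coefficients), as a non-unital algebra
homomorphism `∂¹ : R[x] → R`. -/
def coeffSum (k R : Type*) [CommRing k] [NonUnitalRing R] [Module k R] :
    NUPoly R →ₙₐ[k] R where
  toFun p := p.toFinsupp.sum fun _ a => a
  map_add' p q := by
    show ((p + q).toFinsupp.sum fun _ a => a)
      = (p.toFinsupp.sum fun _ a => a) + q.toFinsupp.sum fun _ a => a
    rw [toFinsupp_add]
    exact Finsupp.sum_add_index' (fun _ => rfl) (fun _ _ _ => rfl)
  map_smul' c p := by
    show ((c • p).toFinsupp.sum fun _ a => a) = c • p.toFinsupp.sum fun _ a => a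
    rw [toFinsupp_smul]
    have h1 : ((c • p.toFinsupp).sum fun _ a => a) = p.toFinsupp.sum fun _ a => c • a :=
      Finsupp.sum_smul_index' (h := fun (_ : ℕ) (a : R) => a) (fun _ => rfl)
    have h2 : (c • p.toFinsupp.sum fun _ a => a) = p.toFinsupp.sum fun _ a => c • a :=
      Finsupp.smul_sum
    rw [h1, h2]
  map_zero' := by
    show ((0 : NUPoly R).toFinsupp.sum fun _ a => a) = 0
    rw [toFinsupp_zero]
    exact Finsupp.sum_zero_index
  map_mul' p q := by
    classical
    show ((p * q).toFinsupp.sum fun _ a => a)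
      = (p.toFinsupp.sum fun _ a => a) * q.toFinsupp.sum fun _ a => a
    rw [mul_def, Finsupp.sum_sum_index (fun _ => rfl) (fun _ _ _ => rfl)]
    have h1 : (p.toFinsupp.sum fun i a =>
          (q.toFinsupp.sum fun j b => Finsupp.single (i + j) (a * b)).sum fun _ c => c)
        = p.toFinsupp.sum fun i a => q.toFinsupp.sum fun j b => a * b := by
      refine Finsupp.sum_congr fun i _ => ?_
      rw [Finsupp.sum_sum_index (fun _ => rfl) (fun _ _ _ => rfl)]
      exact Finsupp.sum_congr fun j _ => Finsupp.sum_single_index rfl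
    have h2 : (p.toFinsupp.sum fun i a => q.toFinsupp.sum fun j b => a * b)
        = p.toFinsupp.sum fun i a => a * q.toFinsupp.sum fun _ b => b :=
      Finsupp.sum_congr fun i _ => (Finsupp.mul_sum _ _).symm
    rw [h1, h2, ← Finsupp.sum_mul]

@[simp] theorem atZero_apply (k : Type*) [CommRing k] [Module k R] (p : NUPoly R) :
    atZero k R p = p.toFinsupp 0 := rfl

@[simp] theorem coeffSum_apply (k : Type*) [CommRing k] [Module k R] (p : NUPoly R) :
    coeffSum k R p = p.toFinsupp.sum fun _ a => a := rfl

end NUPoly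

section Homotopy

variable (k : Type*) [CommRing k]
variable {A B : Type*} [NonUnitalRing A] [Module k A] [NonUnitalRing B] [Module k B]

/-- Two non-unital algebra homomorphisms `f₀ f₁ : A → B` are *elementary homotopic*
if there is a homomorphism `H : A → B[x]` with `∂⁰ ∘ H = f₀` and `∂¹ ∘ H = f₁`. -/
def ElemHomotopic (f₀ f₁ : A →ₙₐ[k] B) : Prop :=
  ∃ H : A →ₙₐ[k] NUPoly B,
    (NUPoly.atZero k B).comp H = f₀ ∧ (NUPoly.coeffSum k B).comp H = f₁

/-- *Homotopy* of non-unital algebra homomorphisms: the equivalence relation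
generated by elementary homotopy. -/
def NUHomotopic (f₀ f₁ : A →ₙₐ[k] B) : Prop :=
  Relation.EqvGen (ElemHomotopic k) f₀ f₁

end Homotopy

section TensorUnitization

variable (k : Type*) [CommRing k]

/-- `γ_u` : for a `k`-linear map `u : C → B` into a non-unital `k`-algebra `B`,
the unique `k`-algebra homomorphism `TensorAlgebra k C → Unitization k B` with
`γ_u (ι c) = inr (u c)`. -/
noncomputable def gammaMap {B C : Type*}
    [NonUnitalRing B] [Module k B] [SMulCommClass k B B] [IsScalarTower k B B]
    [NonUnitalRing C] [Module k C]
    (u : C →ₗ[k] B) : TensorAlgebra k C →ₐ[k] Unitization k B :=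
  TensorAlgebra.lift k ((Unitization.inrHom k k B).comp u)

/-- `η_C := γ_{id C}` : the canonical `k`-algebra homomorphism
`TensorAlgebra k C → Unitization k C`. -/
noncomputable def etaHom (C : Type*)
    [NonUnitalRing C] [Module k C] [SMulCommClass k C C] [IsScalarTower k C C] :
    TensorAlgebra k C →ₐ[k] Unitization k C :=
  gammaMap k (LinearMap.id (R := k) (M := C))

/-- `J(C) := ker η_C`, the ideal of the universal extension
`J(C) → T(C) → C`, as a non-unital subalgebra of the tensor algebra. -/
noncomputable def jIdeal (C : Type*)
    [NonUnitalRing C] [Module k C] [SMulCommClass k C C] [IsScalarTower k C C] :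
    NonUnitalSubalgebra k (TensorAlgebra k C) where
  carrier := {a | etaHom k C a = 0}
  add_mem' := fun {p q} hp hq => by
    simp only [Set.mem_setOf_eq] at *
    rw [map_add, hp, hq, add_zero]
  zero_mem' := by simp only [Set.mem_setOf_eq, map_zero]
  mul_mem' := fun {p q} hp hq => by
    simp only [Set.mem_setOf_eq] at *
    rw [map_mul, hp, zero_mul]
  smul_mem' := fun c p hp => by
    simp only [Set.mem_setOf_eq] at *
    rw [map_smul, hp, smul_zero]

/-- The kernel of a non-unital algebra homomorphism, as a non-unital
subalgebra. -/
noncomputable def nuaKer {B C : Type*}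
    [NonUnitalRing B] [Module k B] [NonUnitalRing C] [Module k C]
    (α : B →ₙₐ[k] C) : NonUnitalSubalgebra k B where
  carrier := {b | α b = 0}
  add_mem' := fun {p q} hp hq => by
    simp only [Set.mem_setOf_eq] at *
    rw [map_add, hp, hq, add_zero]
  zero_mem' := by simp only [Set.mem_setOf_eq, map_zero]
  mul_mem' := fun {p q} hp hq => by
    simp only [Set.mem_setOf_eq] at *
    rw [map_mul, hp, zero_mul]
  smul_mem' := fun c p hp => by
    simp only [Set.mem_setOf_eq] at *
    rw [map_smul, hp, smul_zero]

/-- The functorial extension of a non-unital algebra homomorphism `φ : B → C`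
to unitizations, `Unitization k B → Unitization k C` (with
`inr b ↦ inr (φ b)`). -/
noncomputable def unitizationMap {B C : Type*}
    [NonUnitalRing B] [Module k B] [SMulCommClass k B B] [IsScalarTower k B B]
    [NonUnitalRing C] [Module k C] [SMulCommClass k C C] [IsScalarTower k C C]
    (φ : B →ₙₐ[k] C) : Unitization k B →ₐ[k] Unitization k C :=
  Unitization.lift ((Unitization.inrNonUnitalAlgHom k C).comp φ)

end TensorUnitization

/-! The two classifying maps come from the linear maps `u₀ = h ∘ β` and `u₁ = β' ∘ g` from `C`
to `B'`, and `V̄` is the algebra map out of `T(C)` induced by the straight-line path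
`u₀ + (u₁ - u₀) X` between them, so evaluating at `0` and `1` recovers
`γ_{u₀} = Unitization.map h ∘ γ_β` and `γ_{u₁} = γ_{β'} ∘ T(g)`. Since `α' ∘ u₀ = g = α' ∘ u₁`,
the path becomes constant after applying `α'`; hence `V̄` sends `J(C)` to polynomials with
coefficients in `inr (ker α')`, i.e. into the non-unital polynomial algebra `(ker α')[x]`. -/

section GammaMap

variable {k : Type*} [CommRing k] {B C C' D : Type*}
  [NonUnitalRing B] [Module k B] [SMulCommClass k B B] [IsScalarTower k B B]
  [NonUnitalRing D] [Module k D] [SMulCommClass k D D] [IsScalarTower k D D]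
  [NonUnitalRing C] [Module k C] [NonUnitalRing C'] [Module k C']

@[simp]
theorem gammaMap_ι (u : C →ₗ[k] B) (c : C) :
    gammaMap k u (TensorAlgebra.ι k c) = Unitization.inr (u c) := by
  simp [gammaMap]

@[simp]
theorem unitizationMap_inr (φ : B →ₙₐ[k] D) (b : B) :
    unitizationMap k φ (Unitization.inr b) = Unitization.inr (φ b) := by
  simp [unitizationMap]

@[simp]
theorem fst_unitizationMap (φ : B →ₙₐ[k] D) (x : Unitization k B) :
    (unitizationMap k φ x).fst = x.fst := by
  simp [unitizationMap, Unitization.algebraMap_eq_inl]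

theorem unitizationMap_comp_gammaMap (φ : B →ₙₐ[k] D) (u : C →ₗ[k] B) :
    (unitizationMap k φ).comp (gammaMap k u) = gammaMap k ((φ : B →ₗ[k] D) ∘ₗ u) := by
  refine TensorAlgebra.hom_ext (LinearMap.ext fun c => ?_)
  simp

theorem gammaMap_comp_of_ι (u : C' →ₗ[k] B) (g : C →ₗ[k] C')
    (T : TensorAlgebra k C →ₐ[k] TensorAlgebra k C')
    (hT : ∀ c, T (TensorAlgebra.ι k c) = TensorAlgebra.ι k (g c)) :
    (gammaMap k u).comp T = gammaMap k (u ∘ₗ g) := by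
  refine TensorAlgebra.hom_ext (LinearMap.ext fun c => ?_)
  simp [hT]

theorem exists_inr_of_unitizationMap_eq_zero {φ : B →ₙₐ[k] D} {x : Unitization k B}
    (hx : unitizationMap k φ x = 0) : ∃ b, φ b = 0 ∧ x = Unitization.inr b := by
  have hfst : x.fst = 0 := by simpa using congrArg (fun y => y.fst) hx
  lift x to B using hfst
  refine ⟨x, Unitization.inr_injective (R := k) ?_, rfl⟩
  simpa using hx

end GammaMap

section Eta

variable {k : Type*} [CommRing k] {C C' : Type*}
  [NonUnitalRing C] [Module k C]
  [NonUnitalRing C'] [Module k C'] [SMulCommClass k C' C'] [IsScalarTower k C' C']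

theorem etaHom_comp_of_ι (g : C →ₗ[k] C') (T : TensorAlgebra k C →ₐ[k] TensorAlgebra k C')
    (hT : ∀ c, T (TensorAlgebra.ι k c) = TensorAlgebra.ι k (g c)) :
    (etaHom k C').comp T = gammaMap k g :=
  gammaMap_comp_of_ι LinearMap.id g T hT

theorem unitizationMap_comp_etaHom [SMulCommClass k C C] [IsScalarTower k C C]
    (g : C →ₙₐ[k] C') :
    (unitizationMap k g).comp (etaHom k C) = gammaMap k (g : C →ₗ[k] C') :=
  unitizationMap_comp_gammaMap g LinearMap.id

end Eta

section LinearHomotopy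

open scoped Polynomial

variable {k : Type*} [CommRing k] {B C D : Type*}
  [NonUnitalRing B] [Module k B] [SMulCommClass k B B] [IsScalarTower k B B]
  [NonUnitalRing D] [Module k D] [SMulCommClass k D D] [IsScalarTower k D D]
  [NonUnitalRing C] [Module k C]

def linearPath (u₀ u₁ : C →ₗ[k] B) : C →ₗ[k] (Unitization k B)[X] where
  toFun c := Polynomial.C (Unitization.inr (u₀ c))
    + Polynomial.C (Unitization.inr (u₁ c - u₀ c)) * Polynomial.X
  map_add' x y := by
    simp only [map_add, add_sub_add_comm, Unitization.inr_add, add_mul]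
    abel
  map_smul' r x := by
    simp only [map_smul, ← smul_sub, Unitization.inr_smul, ← Polynomial.smul_C,
      RingHom.id_apply, smul_add, smul_mul_assoc]

def linearHomotopy (u₀ u₁ : C →ₗ[k] B) : TensorAlgebra k C →ₐ[k] (Unitization k B)[X] :=
  TensorAlgebra.lift k (linearPath u₀ u₁)

variable (u₀ u₁ : C →ₗ[k] B)

theorem eq_linearHomotopy_iff (V : TensorAlgebra k C →ₐ[k] (Unitization k B)[X]) :
    V = linearHomotopy u₀ u₁ ↔ ∀ c, V (TensorAlgebra.ι k c)
      = Polynomial.C (Unitization.inr (u₀ c))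
        + Polynomial.C (Unitization.inr (u₁ c - u₀ c)) * Polynomial.X := by
  rw [linearHomotopy, ← TensorAlgebra.lift_unique, LinearMap.ext_iff]
  rfl

@[simp]
theorem linearHomotopy_ι (c : C) : linearHomotopy u₀ u₁ (TensorAlgebra.ι k c)
    = Polynomial.C (Unitization.inr (u₀ c))
      + Polynomial.C (Unitization.inr (u₁ c - u₀ c)) * Polynomial.X :=
  (eq_linearHomotopy_iff u₀ u₁ _).1 rfl c

theorem coeff_zero_linearHomotopy (a : TensorAlgebra k C) :
    (linearHomotopy u₀ u₁ a).coeff 0 = gammaMap k u₀ a := by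
  let eval₀ :=
    Polynomial.eval₂AlgHom (AlgHom.id k (Unitization k B)) 0 fun _ => Commute.zero_right _
  have h : eval₀.comp (linearHomotopy u₀ u₁) = gammaMap k u₀ :=
    TensorAlgebra.hom_ext (LinearMap.ext fun c => by simp [eval₀])
  simpa [eval₀, Polynomial.coeff_zero_eq_eval_zero] using DFunLike.congr_fun h a

theorem eval_one_linearHomotopy (a : TensorAlgebra k C) :
    (linearHomotopy u₀ u₁ a).eval 1 = gammaMap k u₁ a := by
  let eval₁ :=
    Polynomial.eval₂AlgHom (AlgHom.id k (Unitization k B)) 1 fun _ => Commute.one_right _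
  have h : eval₁.comp (linearHomotopy u₀ u₁) = gammaMap k u₁ :=
    TensorAlgebra.hom_ext (LinearMap.ext fun c => by simp [eval₁])
  simpa [eval₁] using DFunLike.congr_fun h a

theorem map_linearHomotopy (φ : B →ₙₐ[k] D) {w : C →ₗ[k] D}
    (hφ₀ : (φ : B →ₗ[k] D) ∘ₗ u₀ = w) (hφ₁ : (φ : B →ₗ[k] D) ∘ₗ u₁ = w)
    (a : TensorAlgebra k C) :
    (linearHomotopy u₀ u₁ a).map (unitizationMap k φ).toRingHom
      = Polynomial.C (gammaMap k w a) := by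
  have h : (Polynomial.mapAlgHom (unitizationMap k φ)).comp (linearHomotopy u₀ u₁)
      = Polynomial.CAlgHom.comp (gammaMap k w) := by
    refine TensorAlgebra.hom_ext (LinearMap.ext fun c => ?_)
    have hc₀ : φ (u₀ c) = w c := LinearMap.congr_fun hφ₀ c
    have hc₁ : φ (u₁ c) = w c := LinearMap.congr_fun hφ₁ c
    simp [hc₀, hc₁, Polynomial.CAlgHom]
  simpa using DFunLike.congr_fun h a

end LinearHomotopy

theorem NonUnitalAlgHom.exists_comp_eq_of_injective {R A P Q : Type*} [CommSemiring R]
    [NonUnitalNonAssocSemiring A] [Module R A] [NonUnitalNonAssocSemiring P] [Module R P]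
    [NonUnitalNonAssocSemiring Q] [Module R Q]
    (φ : P →ₙₐ[R] Q) (hφ : Function.Injective φ) (F : A →ₙₐ[R] Q)
    (hF : ∀ a, F a ∈ Set.range φ) : ∃ H : A →ₙₐ[R] P, φ.comp H = F := by
  choose H hH using hF
  refine ⟨{ toFun := H, map_smul' := ?_, map_zero' := ?_, map_add' := ?_, map_mul' := ?_ },
    NonUnitalAlgHom.ext hH⟩ <;> intros <;> apply hφ <;> simp [hH]

namespace NUPoly

variable {k R T : Type*} [CommRing k] [NonUnitalRing R] [Module k R] [Ring T] [Algebra k T]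

def toPolynomial (ψ : R →ₙₐ[k] T) : NUPoly R →ₙₐ[k] Polynomial T where
  toFun p := ⟨.ofCoeff (p.toFinsupp.mapRange ψ (map_zero ψ))⟩
  map_smul' c p := Polynomial.ext fun n => by simp
  map_zero' := Polynomial.ext fun n => by simp
  map_add' p q := Polynomial.ext fun n => by simp [Polynomial.coeff_ofFinsupp]
  map_mul' p q := Polynomial.ext fun n => by
    simp [Polynomial.coeff_ofFinsupp, Polynomial.coeff_mul, -toFinsupp_mul, mul_apply]

variable (ψ : R →ₙₐ[k] T)

@[simp]
theorem coeff_toPolynomial (p : NUPoly R) (n : ℕ) :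
    (toPolynomial ψ p).coeff n = ψ (p.toFinsupp n) := by
  simp [toPolynomial, Polynomial.coeff_ofFinsupp]

theorem toPolynomial_injective (hψ : Function.Injective ψ) :
    Function.Injective (toPolynomial ψ) := fun p q hpq =>
  toFinsupp_injective <| Finsupp.ext fun n => hψ <| by
    rw [← coeff_toPolynomial, ← coeff_toPolynomial, hpq]

theorem exists_toPolynomial_eq {p : Polynomial T} (hp : ∀ n, p.coeff n ∈ Set.range ψ) :
    ∃ q, toPolynomial ψ q = p := by
  classical
  choose r hr using hp
  let r' n := if p.coeff n = 0 then 0 else r n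
  have hr' n : ψ (r' n) = p.coeff n := by
    by_cases h : p.coeff n = 0 <;> simp [r', h, hr]
  refine ⟨⟨Finsupp.onFinset p.support r' fun n hn => ?_⟩,
    Polynomial.ext fun n => by simp [hr']⟩
  by_contra h
  exact hn (by simp [r', Polynomial.notMem_support_iff.1 h])

theorem eval_one_toPolynomial (p : NUPoly R) :
    (toPolynomial ψ p).eval 1 = ψ (coeffSum k R p) := by
  rw [Polynomial.eval_eq_sum, coeffSum_apply, map_finsuppSum]
  simp only [one_pow, mul_one]
  exact Finsupp.sum_mapRange_index (hf := map_zero ψ) (h := fun _ a => a) fun _ => rfl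

end NUPoly

section SubalgebraInr

variable {k B A : Type*} [CommRing k] [NonUnitalRing B] [Module k B]

def NonUnitalSubalgebra.inrUnitization (S : NonUnitalSubalgebra k B) :
    S →ₙₐ[k] Unitization k B :=
  (Unitization.inrNonUnitalAlgHom k B).comp (NonUnitalSubalgebraClass.subtype S)

@[simp]
theorem NonUnitalSubalgebra.inrUnitization_apply (S : NonUnitalSubalgebra k B) (x : S) :
    S.inrUnitization x = Unitization.inr (x : B) :=
  rfl

theorem NonUnitalSubalgebra.inrUnitization_injective (S : NonUnitalSubalgebra k B) :
    Function.Injective S.inrUnitization := fun _ _ hxy =>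
  Subtype.ext (Unitization.inr_injective (R := k) hxy)

theorem NUPoly.exists_lift_of_coeff_mem [SMulCommClass k B B] [IsScalarTower k B B]
    [NonUnitalRing A] [Module k A] (S : NonUnitalSubalgebra k B)
    (F : A →ₙₐ[k] Polynomial (Unitization k B))
    (hF : ∀ a i, ∃ x ∈ S, (F a).coeff i = Unitization.inr x) :
    ∃ H : A →ₙₐ[k] NUPoly S, (toPolynomial S.inrUnitization).comp H = F :=
  NonUnitalAlgHom.exists_comp_eq_of_injective _
    (toPolynomial_injective _ S.inrUnitization_injective) F fun a =>
      exists_toPolynomial_eq _ fun i => by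
        obtain ⟨x, hx, hxi⟩ := hF a i
        exact ⟨⟨x, hx⟩, hxi.symm⟩

end SubalgebraInr

theorem classifying_maps_commute_up_to_elementary_homotopy_general
    (k : Type*) [CommRing k] {B C B' C' : Type*}
    [NonUnitalRing B] [Module k B] [SMulCommClass k B B] [IsScalarTower k B B]
    [NonUnitalRing C] [Module k C] [SMulCommClass k C C] [IsScalarTower k C C]
    [NonUnitalRing B'] [Module k B'] [SMulCommClass k B' B'] [IsScalarTower k B' B']
    [NonUnitalRing C'] [Module k C'] [SMulCommClass k C' C'] [IsScalarTower k C' C']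
    (α : B →ₙₐ[k] C)
    (α' : B' →ₙₐ[k] C')
    (β : C →ₗ[k] B) (hβ : ∀ c : C, α (β c) = c)
    (β' : C' →ₗ[k] B') (hβ' : ∀ c : C', α' (β' c) = c)
    (h : B →ₙₐ[k] B') (g : C →ₙₐ[k] C') (hcomm : α'.comp h = g.comp α)
    -- `T(g)`, characterized by its values on the generators
    (Tg : TensorAlgebra k C →ₐ[k] TensorAlgebra k C')
    (hTg : ∀ c : C, Tg (TensorAlgebra.ι k c) = TensorAlgebra.ι k (g c))
    -- the classifying maps `ξ_β : J(C) → ker α` and `ξ_{β'} : J(C') → ker α'`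
    (ξβ : jIdeal k C →ₙₐ[k] nuaKer k α)
    (hξβ : ∀ a : jIdeal k C,
      (Unitization.inr ((ξβ a : B)) : Unitization k B)
        = gammaMap k β (a : TensorAlgebra k C))
    (ξβ' : jIdeal k C' →ₙₐ[k] nuaKer k α')
    (hξβ' : ∀ a : jIdeal k C',
      (Unitization.inr ((ξβ' a : B')) : Unitization k B')
        = gammaMap k β' (a : TensorAlgebra k C'))
    -- `J(g)`, the restriction of `T(g)` to `J(C)`
    (Jg : jIdeal k C →ₙₐ[k] jIdeal k C')
    (hJg : ∀ a : jIdeal k C, (Jg a : TensorAlgebra k C') = Tg (a : TensorAlgebra k C))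
    -- the restriction of `h` to a map `ker α → ker α'`
    (hker : nuaKer k α →ₙₐ[k] nuaKer k α')
    (hhker : ∀ x : nuaKer k α, (hker x : B') = h (x : B)) :
    -- existence and uniqueness of `V̄`
    (∃! V : TensorAlgebra k C →ₐ[k] Polynomial (Unitization k B'),
      ∀ c : C, V (TensorAlgebra.ι k c)
        = Polynomial.C (Unitization.inr (h (β c)))
          + Polynomial.C (Unitization.inr (β' (g c) - h (β c))) * Polynomial.X) ∧
    -- and its properties:
    ∀ Vbar : TensorAlgebra k C →ₐ[k] Polynomial (Unitization k B'),
      (∀ c : C, Vbar (TensorAlgebra.ι k c)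
        = Polynomial.C (Unitization.inr (h (β c)))
          + Polynomial.C (Unitization.inr (β' (g c) - h (β c))) * Polynomial.X) →
      -- (i)
      (∀ a : TensorAlgebra k C,
        Polynomial.map (unitizationMap k α').toRingHom (Vbar a)
          = Polynomial.C (etaHom k C' (Tg a))) ∧
      -- (ii)
      (∀ a : TensorAlgebra k C,
        (Vbar a).coeff 0 = unitizationMap k h (gammaMap k β a)) ∧
      (∀ a : TensorAlgebra k C, (Vbar a).eval 1 = gammaMap k β' (Tg a)) ∧
      -- `T(g)` maps `J(C)` into `J(C')`
      (∀ a : TensorAlgebra k C, etaHom k C a = 0 → etaHom k C' (Tg a) = 0) ∧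
      -- the coefficients of `V̄ a` lie in `inr (ker α')` for `a ∈ J(C)`
      (∀ a : TensorAlgebra k C, etaHom k C a = 0 → ∀ i : ℕ,
        ∃ x : B', α' x = 0 ∧ (Vbar a).coeff i = Unitization.inr x) ∧
      -- `V̄` realizes an elementary homotopy between `h ∘ ξ_β` and `ξ_{β'} ∘ J(g)`
      ∃ H : jIdeal k C →ₙₐ[k] NUPoly (nuaKer k α'),
        (∀ (a : jIdeal k C) (i : ℕ),
          (Unitization.inr (((H a).toFinsupp i : nuaKer k α') : B') : Unitization k B')
            = (Vbar (a : TensorAlgebra k C)).coeff i) ∧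
        (NUPoly.atZero k (nuaKer k α')).comp H = hker.comp ξβ ∧
        (NUPoly.coeffSum k (nuaKer k α')).comp H = ξβ'.comp Jg := by
  set u₀ : C →ₗ[k] B' := (h : B →ₗ[k] B') ∘ₗ β
  set u₁ : C →ₗ[k] B' := β' ∘ₗ (g : C →ₗ[k] C')
  refine ⟨⟨linearHomotopy u₀ u₁, (eq_linearHomotopy_iff u₀ u₁ _).1 rfl,
    fun V hV => (eq_linearHomotopy_iff u₀ u₁ V).2 hV⟩, fun V hV => ?_⟩
  obtain rfl := (eq_linearHomotopy_iff u₀ u₁ V).2 hV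
  have hu₀ : (α' : B' →ₗ[k] C') ∘ₗ u₀ = g := LinearMap.ext fun c => by
    simpa [u₀, hβ] using DFunLike.congr_fun hcomm (β c)
  have hu₁ : (α' : B' →ₗ[k] C') ∘ₗ u₁ = g := LinearMap.ext fun c => by simp [u₁, hβ']
  have hη : (etaHom k C').comp Tg = gammaMap k (g : C →ₗ[k] C') :=
    etaHom_comp_of_ι (g : C →ₗ[k] C') Tg hTg
  have hJ a (ha : etaHom k C a = 0) : etaHom k C' (Tg a) = 0 := by
    rw [← AlgHom.comp_apply, hη, ← unitizationMap_comp_etaHom, AlgHom.comp_apply, ha, map_zero]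
  have hmap a : (linearHomotopy u₀ u₁ a).map (unitizationMap k α').toRingHom
      = Polynomial.C (etaHom k C' (Tg a)) := by
    rw [map_linearHomotopy u₀ u₁ α' hu₀ hu₁, ← hη, AlgHom.comp_apply]
  have hcoeff a (ha : etaHom k C a = 0) i :=
    exists_inr_of_unitizationMap_eq_zero (φ := α') <| by
      simpa [hJ a ha, Polynomial.coeff_map] using congrArg (·.coeff i) (hmap a)
  have hV₀ a : (linearHomotopy u₀ u₁ a).coeff 0 = unitizationMap k h (gammaMap k β a) := by
    rw [coeff_zero_linearHomotopy, ← AlgHom.comp_apply, unitizationMap_comp_gammaMap]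
  have hV₁ a : (linearHomotopy u₀ u₁ a).eval 1 = gammaMap k β' (Tg a) := by
    rw [eval_one_linearHomotopy, ← AlgHom.comp_apply, gammaMap_comp_of_ι β' g Tg hTg]
  obtain ⟨H, hH⟩ := NUPoly.exists_lift_of_coeff_mem (nuaKer k α')
    ((linearHomotopy u₀ u₁ : TensorAlgebra k C →ₙₐ[k] Polynomial (Unitization k B')).comp
      (NonUnitalSubalgebraClass.subtype (jIdeal k C))) fun a => hcoeff a a.2
  have hHa (a : jIdeal k C) :
      NUPoly.toPolynomial (nuaKer k α').inrUnitization (H a) = linearHomotopy u₀ u₁ a :=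
    DFunLike.congr_fun hH a
  refine ⟨hmap, hV₀, hV₁, hJ, hcoeff, H, fun a i => by simpa using congrArg (·.coeff i) (hHa a),
    NonUnitalAlgHom.ext fun a => ?_, NonUnitalAlgHom.ext fun a => ?_⟩ <;>
    apply (nuaKer k α').inrUnitization_injective
  · rw [NonUnitalAlgHom.comp_apply, NUPoly.atZero_apply, ← NUPoly.coeff_toPolynomial, hHa, hV₀,
      ← hξβ, unitizationMap_inr, NonUnitalAlgHom.comp_apply,
      NonUnitalSubalgebra.inrUnitization_apply, hhker]
  · rw [NonUnitalAlgHom.comp_apply, ← NUPoly.eval_one_toPolynomial, hHa, hV₁, ← hJg, ← hξβ',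
      NonUnitalAlgHom.comp_apply, NonUnitalSubalgebra.inrUnitization_apply]

/-- Let `α : B → C` and `α' : B' → C'` be surjective
non-unital `k`-algebra homomorphisms with `k`-linear splittings `β` of `α` and
`β'` of `α'`, and let `h : B → B'`, `g : C → C'` be non-unital `k`-algebra
homomorphisms with `α' ∘ h = g ∘ α`.  Let
`T(g) : TensorAlgebra k C → TensorAlgebra k C'` be the algebra homomorphism
with `T(g) (ι c) = ι (g c)`, and let
`V̄ : TensorAlgebra k C → Polynomial (Unitization k B')` be the unique
`k`-algebra homomorphism with
`V̄ (ι c) = C (inr (h (β c))) + C (inr (β' (g c) - h (β c))) · X`.  Then: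
(i) `Polynomial.map (Unitization.map α') ∘ V̄ = Polynomial.C ∘ η_{C'} ∘ T(g)`;
(ii) evaluation at `X = 0` composed with `V̄` equals `Unitization.map h ∘ γ_β`,
and evaluation at `X = 1` composed with `V̄` equals `γ_{β'} ∘ T(g)`.
Consequently `T(g)` maps `J(C)` into `J(C')`, every coefficient of `V̄ a` for
`a ∈ J(C)` lies in `inr (ker α')`, and `V̄` realizes an elementary homotopy
between `h ∘ ξ_β` and `ξ_{β'} ∘ J(g) : J(C) → ker α'`, where `J(g)` is the
restriction of `T(g)` to `J(C)`. -/
theorem classifying_maps_commute_up_to_elementary_homotopy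
    (k : Type*) [CommRing k] {B C B' C' : Type*}
    [NonUnitalRing B] [Module k B] [SMulCommClass k B B] [IsScalarTower k B B]
    [NonUnitalRing C] [Module k C] [SMulCommClass k C C] [IsScalarTower k C C]
    [NonUnitalRing B'] [Module k B'] [SMulCommClass k B' B'] [IsScalarTower k B' B']
    [NonUnitalRing C'] [Module k C'] [SMulCommClass k C' C'] [IsScalarTower k C' C']
    (α : B →ₙₐ[k] C) (hα : Function.Surjective α)
    (α' : B' →ₙₐ[k] C') (hα' : Function.Surjective α')
    (β : C →ₗ[k] B) (hβ : ∀ c : C, α (β c) = c)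
    (β' : C' →ₗ[k] B') (hβ' : ∀ c : C', α' (β' c) = c)
    (h : B →ₙₐ[k] B') (g : C →ₙₐ[k] C') (hcomm : α'.comp h = g.comp α)
    -- `T(g)`, characterized by its values on the generators
    (Tg : TensorAlgebra k C →ₐ[k] TensorAlgebra k C')
    (hTg : ∀ c : C, Tg (TensorAlgebra.ι k c) = TensorAlgebra.ι k (g c))
    -- the classifying maps `ξ_β : J(C) → ker α` and `ξ_{β'} : J(C') → ker α'`
    (ξβ : jIdeal k C →ₙₐ[k] nuaKer k α)
    (hξβ : ∀ a : jIdeal k C,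
      (Unitization.inr ((ξβ a : B)) : Unitization k B)
        = gammaMap k β (a : TensorAlgebra k C))
    (ξβ' : jIdeal k C' →ₙₐ[k] nuaKer k α')
    (hξβ' : ∀ a : jIdeal k C',
      (Unitization.inr ((ξβ' a : B')) : Unitization k B')
        = gammaMap k β' (a : TensorAlgebra k C'))
    -- `J(g)`, the restriction of `T(g)` to `J(C)`
    (Jg : jIdeal k C →ₙₐ[k] jIdeal k C')
    (hJg : ∀ a : jIdeal k C, (Jg a : TensorAlgebra k C') = Tg (a : TensorAlgebra k C))
    -- the restriction of `h` to a map `ker α → ker α'`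
    (hker : nuaKer k α →ₙₐ[k] nuaKer k α')
    (hhker : ∀ x : nuaKer k α, (hker x : B') = h (x : B)) :
    -- existence and uniqueness of `V̄`
    (∃! V : TensorAlgebra k C →ₐ[k] Polynomial (Unitization k B'),
      ∀ c : C, V (TensorAlgebra.ι k c)
        = Polynomial.C (Unitization.inr (h (β c)))
          + Polynomial.C (Unitization.inr (β' (g c) - h (β c))) * Polynomial.X) ∧
    -- and its properties:
    ∀ Vbar : TensorAlgebra k C →ₐ[k] Polynomial (Unitization k B'),
      (∀ c : C, Vbar (TensorAlgebra.ι k c)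
        = Polynomial.C (Unitization.inr (h (β c)))
          + Polynomial.C (Unitization.inr (β' (g c) - h (β c))) * Polynomial.X) →
      -- (i)
      (∀ a : TensorAlgebra k C,
        Polynomial.map (unitizationMap k α').toRingHom (Vbar a)
          = Polynomial.C (etaHom k C' (Tg a))) ∧
      -- (ii)
      (∀ a : TensorAlgebra k C,
        (Vbar a).coeff 0 = unitizationMap k h (gammaMap k β a)) ∧
      (∀ a : TensorAlgebra k C, (Vbar a).eval 1 = gammaMap k β' (Tg a)) ∧
      -- `T(g)` maps `J(C)` into `J(C')`
      (∀ a : TensorAlgebra k C, etaHom k C a = 0 → etaHom k C' (Tg a) = 0) ∧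
      -- the coefficients of `V̄ a` lie in `inr (ker α')` for `a ∈ J(C)`
      (∀ a : TensorAlgebra k C, etaHom k C a = 0 → ∀ i : ℕ,
        ∃ x : B', α' x = 0 ∧ (Vbar a).coeff i = Unitization.inr x) ∧
      -- `V̄` realizes an elementary homotopy between `h ∘ ξ_β` and `ξ_{β'} ∘ J(g)`
      ∃ H : jIdeal k C →ₙₐ[k] NUPoly (nuaKer k α'),
        (∀ (a : jIdeal k C) (i : ℕ),
          (Unitization.inr (((H a).toFinsupp i : nuaKer k α') : B') : Unitization k B')
            = (Vbar (a : TensorAlgebra k C)).coeff i) ∧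
        (NUPoly.atZero k (nuaKer k α')).comp H = hker.comp ξβ ∧
        (NUPoly.coeffSum k (nuaKer k α')).comp H = ξβ'.comp Jg :=
  classifying_maps_commute_up_to_elementary_homotopy_general k α α' β hβ β' hβ' h g hcomm Tg hTg ξβ
    hξβ ξβ' hξβ' Jg hJg hker hhker
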